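/- arXiv:2201.11057 — 5 statements merged into one kernel-verified Lean document; each statement's English description precedes it below -/
import Mathlib

section
/- The Mathieu group M24 exists: there is a subgroup of the symmetric group on 24 points that acts 5-transitively but whose order is strictly less than 24!/2 (i.e., it is a proper subgroup of the alternating group). -/
/-!
Take for `G` the group of coordinate permutations preserving the extended binary Golay code,
given by a generator matrix `[I₁₂ | A]` with `A` the bordered circulant of quadratic residues
mod 11. Five-transitivity is certified by a base `0, 1, 2, 3, 4` with a strong generating set:
for each `k < 5`, two code automorphisms fixing the first `k` base points, together with a
Schreier vector showing that they move every other point to the `k`-th one. Each of these ten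
permutations is checked to map the twelve rows into the code, which suffices because the code is
finite dimensional. For the order bound, a subgroup of index at most two contains every square,
but the square of a 3-cycle does not preserve the code.
-/

/-- A subgroup `G` of the permutations of `X` acts `k`-transitively if any ordered
`k`-tuple of distinct elements of `X` can be mapped to any other by some element of `G`. -/
def IsMultiplyTransitive {X : Type*} (G : Subgroup (Equiv.Perm X)) (k : ℕ) : Prop :=
  ∀ v w : Fin k → X, Function.Injective v → Function.Injective w →
    ∃ g ∈ G, ∀ i, g (v i) = w i

open Equiv Function Submodule

namespace Submodule

variable {R X : Type*}

def permAut [Semiring R] (C : Submodule R (X → R)) : Subgroup (Perm X) where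
  carrier := {σ | ∀ v, v ∘ σ ∈ C ↔ v ∈ C}
  one_mem' _ := Iff.rfl
  mul_mem' {σ τ} hσ hτ v := (hτ (v ∘ σ)).trans (hσ v)
  inv_mem' {σ} hσ v := by
    simpa [comp_assoc] using (hσ (v ∘ ⇑σ⁻¹)).symm

theorem comp_mem_of_mem_permAut [Semiring R] {C : Submodule R (X → R)} {σ : Perm X}
    (hσ : σ ∈ C.permAut) {v : X → R} (hv : v ∈ C) : v ∘ σ ∈ C :=
  (hσ v).mpr hv

theorem mem_permAut_of_forall_comp_mem [DivisionRing R] [Finite X] {C : Submodule R (X → R)}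
    {σ : Perm X} (h : ∀ v ∈ C, v ∘ σ ∈ C) : σ ∈ C.permAut := by
  have hC : C = C.comap (LinearEquiv.funCongrLeft R R σ).toLinearMap :=
    eq_of_le_of_finrank_eq h <| by rw [comap_equiv_eq_map_symm, LinearEquiv.finrank_map_eq]
  exact fun v => ⟨fun hv => hC ▸ hv, h v⟩

theorem mem_permAut_span_of_forall_comp_mem [DivisionRing R] [Finite X] {ι : Type*}
    {g : ι → X → R} {σ : Perm X} (h : ∀ i, g i ∘ σ ∈ span R (Set.range g)) :
    σ ∈ (span R (Set.range g)).permAut :=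
  mem_permAut_of_forall_comp_mem <| span_le (p := (span R _).comap (LinearMap.funLeft R R σ)).mpr <|
    Set.range_subset_iff.mpr h

theorem mem_span_range_append_iff [Semiring R] {m n : ℕ} (A : Fin m → Fin n → R)
    (v : Fin (m + n) → R) :
    v ∈ span R (Set.range fun j => Fin.append (Pi.single j 1) (A j)) ↔
      ∀ i, v (Fin.natAdd m i) = ∑ j, v (Fin.castAdd n j) * A j i := by
  have eval_castAdd (c : Fin m → R) (i : Fin m) :
      (∑ j, c j • Fin.append (Pi.single j 1) (A j)) (Fin.castAdd n i) = c i := by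
    simp [Finset.sum_apply, Pi.single_apply]
  constructor
  · rintro hv i
    obtain ⟨c, rfl⟩ := mem_span_range_iff_exists_fun R |>.mp hv
    simp [eval_castAdd, Finset.sum_apply]
  · intro hv
    have hsum : ∑ j, v (Fin.castAdd n j) • Fin.append (Pi.single j 1) (A j) = v := by
      ext i
      refine Fin.addCases (fun i => ?_) (fun i => ?_) i
      · exact eval_castAdd _ i
      · simp [Finset.sum_apply, hv i]
    exact hsum ▸ sum_mem fun j _ => smul_mem _ _ (subset_span ⟨j, rfl⟩)

end Submodule

section SchreierVector

variable {X ι : Type*} [DecidableEq X]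

/-- The transversal element read off a Schreier vector `ℓ` rooted at `a`: walking along
`x ↦ s (ℓ x) x`, it maps `x` to `a` whenever the walk reaches `a` within `n` steps. -/
def schreierWord (s : ι → Perm X) (ℓ : X → ι) (a : X) : ℕ → X → Perm X
  | 0, _ => 1
  | n + 1, x => if x = a then 1 else schreierWord s ℓ a n (s (ℓ x) x) * s (ℓ x)

theorem schreierWord_mem {G : Subgroup (Perm X)} {s : ι → Perm X} (hs : ∀ i, s i ∈ G)
    (ℓ : X → ι) (a : X) : ∀ n x, schreierWord s ℓ a n x ∈ G
  | 0, _ => G.one_mem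
  | n + 1, x => by
    rw [schreierWord]
    split_ifs
    exacts [G.one_mem, G.mul_mem (schreierWord_mem hs ℓ a n _) (hs _)]

end SchreierVector

section MultiplyTransitive

variable {X : Type*} {G : Subgroup (Perm X)} {n : ℕ} (b : Fin n → X)

theorem exists_mem_apply_eq_of_injective
    (h : ∀ k : Fin n, ∀ x, (∀ i < k, x ≠ b i) → ∃ g ∈ G, (∀ i < k, g (b i) = b i) ∧ g x = b k)
    {v : Fin n → X} (hv : Injective v) : ∃ g ∈ G, ∀ i, g (v i) = b i := by
  suffices ∀ m ≤ n, ∃ g ∈ G, ∀ i : Fin n, (i : ℕ) < m → g (v i) = b i by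
    obtain ⟨g, hg, hgv⟩ := this n le_rfl
    exact ⟨g, hg, fun i => hgv i i.isLt⟩
  intro m hm
  induction m with
  | zero => exact ⟨1, G.one_mem, fun i hi => absurd hi (Nat.not_lt_zero _)⟩
  | succ m ih =>
    obtain ⟨g, hg, hgv⟩ := ih (by omega)
    let k : Fin n := ⟨m, hm⟩
    have hfresh : ∀ i < k, g (v k) ≠ b i := fun i hi heq =>
      hi.ne' (hv (g.injective (heq.trans (hgv i hi).symm)))
    obtain ⟨f, hf, hfix, hfk⟩ := h k (g (v k)) hfresh
    refine ⟨f * g, G.mul_mem hf hg, fun i hi => ?_⟩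
    rcases Nat.lt_succ_iff_lt_or_eq.mp hi with hlt | hik
    · rw [Perm.mul_apply, hgv i hlt, hfix i hlt]
    · rw [show i = k from Fin.ext hik]
      exact hfk

theorem isMultiplyTransitive_of_exists_fix_apply_eq
    (h : ∀ k : Fin n, ∀ x, (∀ i < k, x ≠ b i) → ∃ g ∈ G, (∀ i < k, g (b i) = b i) ∧ g x = b k) :
    IsMultiplyTransitive G n := by
  intro v w hv hw
  obtain ⟨g, hg, hgv⟩ := exists_mem_apply_eq_of_injective b h hv
  obtain ⟨f, hf, hfw⟩ := exists_mem_apply_eq_of_injective b h hw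
  refine ⟨f⁻¹ * g, G.mul_mem (G.inv_mem hf) hg, fun i => ?_⟩
  rw [Perm.mul_apply, Perm.inv_eq_iff_eq, hgv, hfw]

end MultiplyTransitive

theorem Subgroup.card_mul_two_lt_of_sq_notMem {K : Type*} [Group K] [Finite K] {H : Subgroup K}
    {g : K} (hg : g ^ 2 ∉ H) : Nat.card H * 2 < Nat.card K := by
  have h0 : H.index ≠ 0 := H.index_ne_zero_of_finite
  have h1 : H.index ≠ 1 := fun h => hg (index_eq_one.mp h ▸ mem_top _)
  have h2 : H.index ≠ 2 := fun h => hg (H.sq_mem_of_index_two h g)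
  calc Nat.card H * 2 < Nat.card H * 3 := by have : 0 < Nat.card H := Nat.card_pos; omega
    _ ≤ Nat.card H * H.index := Nat.mul_le_mul_left _ (by omega)
    _ = Nat.card K := H.card_mul_index

def golayA (i j : Fin 12) : ZMod 2 :=
  if i = 11 ∧ j = 11 then 0
  else if i = 11 ∨ j = 11 then 1
  else
    let d : ZMod 11 := (j : ℕ) - (i : ℕ)
    if d ≠ 0 ∧ IsSquare d then 0 else 1

def golayRow (j : Fin 12) : Fin 24 → ZMod 2 := Fin.append (Pi.single j 1) (golayA j)

def golayCode : Submodule (ZMod 2) (Fin 24 → ZMod 2) := span (ZMod 2) (Set.range golayRow)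

theorem mem_golayCode_iff (v : Fin 24 → ZMod 2) :
    v ∈ golayCode ↔ ∀ i : Fin 12, v (Fin.natAdd 12 i) = ∑ j, v (Fin.castAdd 12 j) * golayA j i :=
  mem_span_range_append_iff golayA v

instance : DecidablePred (· ∈ golayCode) := fun v => decidable_of_iff _ (mem_golayCode_iff v).symm

def M24 : Subgroup (Perm (Fin 24)) := golayCode.permAut

namespace M24

theorem mem_of_forall_golayRow_comp_mem {σ : Perm (Fin 24)}
    (h : ∀ j, golayRow j ∘ σ ∈ golayCode) : σ ∈ M24 :=
  mem_permAut_span_of_forall_comp_mem h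

def base : Fin 5 → Fin 24 := Fin.castLE (by norm_num)

/-- For each `k`, two elements of `M24` fixing `base 0, …, base (k - 1)` and generating a group
transitive on the remaining points (found by machine). -/
def strongGenFun : Fin 5 → Fin 2 → Fin 24 → Fin 24 := ![
  ![![4, 5, 13, 10, 20, 1, 9, 21, 15, 19, 6, 12, 14, 17, 18, 3, 23, 11, 0, 22, 2, 8, 7, 16],
    ![5, 17, 13, 9, 22, 3, 8, 16, 10, 1, 15, 18, 21, 11, 12, 4, 2, 0, 7, 23, 14, 19, 6, 20]],
  ![![0, 5, 17, 13, 14, 7, 15, 20, 22, 21, 23, 8, 16, 11, 1, 12, 18, 6, 9, 2, 10, 3, 4, 19],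
    ![0, 22, 13, 9, 4, 6, 19, 11, 10, 2, 20, 5, 17, 23, 16, 21, 1, 7, 18, 12, 14, 3, 8, 15]],
  ![![0, 1, 7, 22, 16, 21, 13, 3, 18, 5, 4, 2, 11, 15, 17, 10, 20, 8, 23, 6, 9, 19, 14, 12],
    ![0, 1, 4, 14, 16, 13, 23, 22, 11, 2, 10, 17, 6, 20, 8, 18, 19, 3, 12, 9, 7, 21, 5, 15]],
  ![![0, 1, 2, 4, 15, 3, 5, 23, 11, 22, 6, 16, 17, 9, 13, 19, 7, 18, 14, 10, 21, 8, 12, 20],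
    ![0, 1, 2, 15, 8, 10, 4, 17, 21, 3, 7, 18, 9, 20, 13, 23, 12, 22, 5, 16, 6, 14, 11, 19]],
  ![![0, 1, 2, 3, 13, 6, 19, 20, 17, 8, 21, 22, 5, 9, 16, 14, 10, 4, 11, 23, 18, 15, 7, 12],
    ![0, 1, 2, 3, 23, 4, 22, 10, 17, 19, 6, 8, 20, 16, 11, 7, 5, 21, 9, 12, 18, 14, 15, 13]]]

theorem strongGenFun_injective : ∀ k j, Injective (strongGenFun k j) := by decide

noncomputable def strongGen (k : Fin 5) (j : Fin 2) : Perm (Fin 24) :=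
  Equiv.ofBijective _ (strongGenFun_injective k j).bijective_of_finite

theorem strongGen_mem (k : Fin 5) (j : Fin 2) : strongGen k j ∈ M24 :=
  mem_of_forall_golayRow_comp_mem <|
    (by decide +kernel : ∀ k j i, golayRow i ∘ strongGen k j ∈ golayCode) k j

def schreierVector : Fin 5 → Fin 24 → Fin 2 := ![
  ![0, 1, 0, 1, 0, 0, 0, 1, 0, 1, 0, 1, 0, 0, 0, 1, 1, 1, 0, 1, 1, 1, 1, 1],
  ![0, 0, 0, 0, 0, 0, 0, 0, 0, 1, 1, 0, 0, 1, 0, 0, 1, 1, 0, 1, 1, 0, 0, 1],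
  ![0, 0, 0, 1, 0, 1, 1, 1, 1, 1, 0, 0, 0, 1, 1, 1, 0, 0, 1, 1, 0, 0, 0, 0],
  ![0, 0, 0, 0, 1, 0, 0, 1, 0, 1, 0, 1, 1, 0, 0, 0, 1, 0, 1, 0, 1, 1, 0, 0],
  ![0, 0, 0, 0, 0, 1, 0, 0, 0, 0, 1, 1, 0, 1, 0, 0, 1, 0, 1, 1, 0, 1, 1, 0]]

theorem schreierWord_fix_apply_eq : ∀ k : Fin 5, ∀ x, (∀ i < k, x ≠ base i) →
    let g := schreierWord (strongGen k) (schreierVector k) (base k) 24 x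
    (∀ i < k, g (base i) = base i) ∧ g x = base k := by
  decide +kernel

theorem isMultiplyTransitive : IsMultiplyTransitive M24 5 :=
  isMultiplyTransitive_of_exists_fix_apply_eq base fun k x hx =>
    ⟨_, schreierWord_mem (strongGen_mem k) _ _ 24 x, schreierWord_fix_apply_eq k x hx⟩

theorem sq_swap_mul_swap_notMem : (swap 0 1 * swap 1 2 : Perm (Fin 24)) ^ 2 ∉ M24 := fun h =>
  absurd (comp_mem_of_mem_permAut h (subset_span ⟨0, rfl⟩)) (by decide +kernel)

end M24

/-- The Mathieu group M24 exists: a subgroup of the symmetric group on 24 points which acts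
5-transitively but whose order is strictly less than 24!/2, so it is a proper subgroup of
the alternating group. -/
theorem mathieu_M24_exists :
    ∃ G : Subgroup (Equiv.Perm (Fin 24)),
      IsMultiplyTransitive G 5 ∧ Nat.card G < Nat.factorial 24 / 2 := by
  refine ⟨M24, M24.isMultiplyTransitive, ?_⟩
  have h := Subgroup.card_mul_two_lt_of_sq_notMem M24.sq_swap_mul_swap_notMem
  rw [Nat.card_perm, Nat.card_fin] at h
  have : 2 ∣ Nat.factorial 24 := Nat.dvd_factorial two_pos (by norm_num)
  omega
end

section
/- The subgroup of Sym(Fin 7) generated by the 7-cycle (0 1 2 3 4 5 6) and the permutation (2 4)(5 6) acts 2-transitively on Fin 7 and has index 30 in Sym(Fin 7). -/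
/-!
Both generators are collineations of the Fano plane whose lines are the translates
`{i, i + 1, i + 3}` of the difference set `{0, 1, 3}` mod 7. A collineation fixing two points of
a line fixes its third point, so one fixing the non-collinear points `0, 1, 2` is the identity:
collineations act freely on frames (ordered non-collinear triples), of which there are
`7 * 6 * 4 = 168`. Words `a^i b a^j b a^k` in the generators `a = (0 1 2 3 4 5 6)` and
`b = (2 4)(5 6)` already send `(0, 1)` to every pair of distinct points and, once a frame's first
two points are moved to `0, 1`, also reach its third point. So the group acts regularly on
frames: it is 2-transitive of order 168, and `5040 / 168 = 30`.
-/

open Equiv Finset Pointwise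

theorem isMultiplyTransitive_two_of_exists_apply_eq_pair {α : Type*} {H : Subgroup (Perm α)}
    {p q : α} (h : ∀ x y, x ≠ y → ∃ g ∈ H, g p = x ∧ g q = y) : IsMultiplyTransitive H 2 := by
  have hne : ∀ v : Fin 2 → α, Function.Injective v → v 0 ≠ v 1 :=
    fun v hv h01 => absurd (hv h01) (by decide)
  intro v w hv hw
  obtain ⟨g, hg, hg0, hg1⟩ := h (v 0) (v 1) (hne v hv)
  obtain ⟨k, hk, hk0, hk1⟩ := h (w 0) (w 1) (hne w hw)
  refine ⟨k * g⁻¹, mul_mem hk (inv_mem hg), fun i => ?_⟩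
  fin_cases i
  · simp [← hg0, hk0]
  · simp [← hg1, hk1]

namespace Fano

def lines : Finset (Finset (Fin 7)) := univ.image fun i : Fin 7 => {i, i + 1, i + 3}

abbrev collineations : Subgroup (Perm (Fin 7)) := MulAction.stabilizer (Perm (Fin 7)) lines

theorem eq_of_mem_lines : ∀ ℓ ∈ lines, ∀ ℓ' ∈ lines, ∀ p q : Fin 7, p ≠ q →
    p ∈ ℓ → q ∈ ℓ → p ∈ ℓ' → q ∈ ℓ' → ℓ = ℓ' := by
  decide +kernel

theorem pairwise_ne_of_mem_lines : ∀ p q r : Fin 7, {p, q, r} ∈ lines →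
    p ≠ q ∧ p ≠ r ∧ q ≠ r := by
  decide +kernel

theorem smul_mem_lines {g : Perm (Fin 7)} (hg : g ∈ collineations) {ℓ : Finset (Fin 7)}
    (hℓ : ℓ ∈ lines) : g • ℓ ∈ lines := by
  rw [← MulAction.mem_stabilizer_iff.mp hg]
  exact smul_mem_smul_finset hℓ

theorem apply_eq_self_of_mem_lines {g : Perm (Fin 7)} (hg : g ∈ collineations) {p q r : Fin 7}
    (hℓ : {p, q, r} ∈ lines) (hp : g p = p) (hq : g q = q) : g r = r := by
  obtain ⟨hpq, hpr, hqr⟩ := pairwise_ne_of_mem_lines p q r hℓ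
  have himage : g • ({p, q, r} : Finset (Fin 7)) = {p, q, g r} := by
    simp [smul_finset_insert, hp, hq]
  have hfix : g • ({p, q, r} : Finset (Fin 7)) = {p, q, r} :=
    eq_of_mem_lines _ (smul_mem_lines hg hℓ) _ hℓ p q hpq (by simp [himage])
      (by simp [himage]) (by simp) (by simp)
  have hr : g r ∈ ({p, q, r} : Finset (Fin 7)) := by
    rw [← hfix, himage]; simp
  simp only [mem_insert, mem_singleton] at hr
  rcases hr with hr | hr | hr
  · exact absurd (g.injective (hr.trans hp.symm)) hpr.symm
  · exact absurd (g.injective (hr.trans hq.symm)) hqr.symm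
  · exact hr

theorem eq_one_of_fixes_zero_one_two {g : Perm (Fin 7)} (hg : g ∈ collineations)
    (h0 : g 0 = 0) (h1 : g 1 = 1) (h2 : g 2 = 2) : g = 1 := by
  have h3 : g 3 = 3 := apply_eq_self_of_mem_lines hg (p := 0) (q := 1) (by decide +kernel) h0 h1
  have h6 : g 6 = 6 := apply_eq_self_of_mem_lines hg (p := 0) (q := 2) (by decide +kernel) h0 h2
  have h4 : g 4 = 4 := apply_eq_self_of_mem_lines hg (p := 1) (q := 2) (by decide +kernel) h1 h2
  have h5 : g 5 = 5 := apply_eq_self_of_mem_lines hg (p := 2) (q := 3) (by decide +kernel) h2 h3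
  ext x
  fin_cases x <;> simp [*]

def IsFrame (v : Fin 3 → Fin 7) : Prop :=
  Function.Injective v ∧ ∀ ℓ ∈ lines, ∃ i, v i ∉ ℓ

instance : DecidablePred IsFrame := fun _ => inferInstanceAs (Decidable (_ ∧ _))

theorem card_frames : #{v | IsFrame v} = 168 := by
  decide +kernel

def frame₀ : Fin 3 → Fin 7 := ![0, 1, 2]

theorem IsFrame.smul {g : Perm (Fin 7)} (hg : g ∈ collineations) {v : Fin 3 → Fin 7}
    (hv : IsFrame v) : IsFrame (g • v) := by
  refine ⟨g.injective.comp hv.1, fun ℓ hℓ => ?_⟩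
  obtain ⟨i, hi⟩ := hv.2 _ (smul_mem_lines (inv_mem hg) hℓ)
  exact ⟨i, by simpa [mem_inv_smul_finset_iff] using hi⟩

theorem card_eq_of_transitive_on_frames {H : Subgroup (Perm (Fin 7))} (hH : H ≤ collineations)
    (htrans : ∀ v, IsFrame v → ∃ g ∈ H, g • frame₀ = v) : Nat.card H = 168 := by
  have hstab : MulAction.stabilizer H frame₀ = ⊥ := by
    refine (Subgroup.eq_bot_iff_forall _).2 fun g hg => ?_
    have hg' : (g : Perm (Fin 7)) • frame₀ = frame₀ := hg
    exact Subtype.ext <| eq_one_of_fixes_zero_one_two (hH g.2) (congrFun hg' 0)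
      (congrFun hg' 1) (congrFun hg' 2)
  have horbit : MulAction.orbit H frame₀ = ↑({v | IsFrame v} : Finset _) := by
    ext v
    simp only [coe_filter, mem_univ, true_and, Set.mem_ofPred_eq]
    constructor
    · rintro ⟨g, rfl⟩
      exact IsFrame.smul (hH g.2) (by decide +kernel)
    · intro hv
      obtain ⟨g, hg, rfl⟩ := htrans v hv
      exact ⟨⟨g, hg⟩, rfl⟩
  rw [← Subgroup.index_bot, ← hstab, MulAction.index_stabilizer, horbit, Set.ncard_coe_finset,
    card_frames]

end Fano

namespace MathieuSevenLetters

open Fano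

def rotation : Perm (Fin 7) := finRotate 7

def involution : Perm (Fin 7) := swap 2 4 * swap 5 6

def group : Subgroup (Perm (Fin 7)) := Subgroup.closure {rotation, involution}

theorem rotation_mem : rotation ∈ group := Subgroup.subset_closure (by simp)

theorem involution_mem : involution ∈ group := Subgroup.subset_closure (by simp)

theorem group_le_collineations : group ≤ collineations := by
  refine Subgroup.closure_le _ |>.2 <| Set.insert_subset_iff.2 ⟨?_, Set.singleton_subset_iff.2 ?_⟩
  · exact MulAction.mem_stabilizer_iff.2 (by decide +kernel)
  · exact MulAction.mem_stabilizer_iff.2 (by decide +kernel)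

def word (i j k : ℕ) : Perm (Fin 7) :=
  rotation ^ i * involution * rotation ^ j * involution * rotation ^ k

theorem word_mem (i j k : ℕ) : word i j k ∈ group :=
  mul_mem (mul_mem (mul_mem (mul_mem (pow_mem rotation_mem i) involution_mem)
    (pow_mem rotation_mem j)) involution_mem) (pow_mem rotation_mem k)

theorem exists_word_apply_eq_pair :
    ∀ x y : Fin 7, x ≠ y → ∃ i j k : Fin 7, word i j k 0 = x ∧ word i j k 1 = y := by
  decide +kernel

theorem exists_word_smul_frame₀_eq :
    ∀ z : Fin 7, IsFrame ![0, 1, z] → ∃ i j k : Fin 7, word i j k • frame₀ = ![0, 1, z] := by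
  decide +kernel

theorem exists_apply_eq_pair {x y : Fin 7} (hxy : x ≠ y) : ∃ g ∈ group, g 0 = x ∧ g 1 = y := by
  obtain ⟨i, j, k, h⟩ := exists_word_apply_eq_pair x y hxy
  exact ⟨word i j k, word_mem i j k, h⟩

theorem exists_smul_frame₀_eq (v : Fin 3 → Fin 7) (hv : IsFrame v) :
    ∃ g ∈ group, g • frame₀ = v := by
  obtain ⟨g, hg, hg0, hg1⟩ := exists_apply_eq_pair (hv.1.ne (by decide : (0 : Fin 3) ≠ 1))
  set u := g⁻¹ • v with hu
  have hu_eq : u = ![0, 1, u 2] := by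
    funext i; fin_cases i <;> simp [u, ← hg0, ← hg1]
  obtain ⟨i, j, k, hword⟩ := exists_word_smul_frame₀_eq (u 2)
    (hu_eq ▸ hv.smul (group_le_collineations (inv_mem hg)))
  refine ⟨g * word i j k, mul_mem hg (word_mem i j k), ?_⟩
  rw [mul_smul, hword, ← hu_eq, hu, smul_inv_smul]

end MathieuSevenLetters

/-- The subgroup of `Sym(Fin 7)` generated by the 7-cycle `(0 1 2 3 4 5 6)` and the
permutation `(2 4)(5 6)` acts 2-transitively on `Fin 7` and has index 30. -/
theorem mathieu_seven_letters :
    IsMultiplyTransitive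
        (Subgroup.closure {finRotate 7, Equiv.swap (2 : Fin 7) 4 * Equiv.swap 5 6}) 2 ∧
      (Subgroup.closure
        {finRotate 7, Equiv.swap (2 : Fin 7) 4 * Equiv.swap 5 6}).index = 30 := by
  refine ⟨isMultiplyTransitive_two_of_exists_apply_eq_pair fun _ _ =>
    MathieuSevenLetters.exists_apply_eq_pair, ?_⟩
  have hcard : Nat.card MathieuSevenLetters.group = 168 :=
    Fano.card_eq_of_transitive_on_frames MathieuSevenLetters.group_le_collineations
      MathieuSevenLetters.exists_smul_frame₀_eq
  have hindex := MathieuSevenLetters.group.index_mul_card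
  rw [hcard, Nat.card_perm, Nat.card_fin] at hindex
  exact Nat.eq_of_mul_eq_mul_right (by norm_num) (hindex.trans (by decide : Nat.factorial 7 = 30 * 168))
end

section
/- The subgroup of Sym(Fin 11) generated by the affine maps z ↦ z+1 and z ↦ 4z on Z/11Z, together with the permutation (4 3)(5 9)(10 2)(7 6), acts 2-transitively on 11 points and has index 60480 in Sym(Fin 11). -/
instance : Fact (Nat.Prime 11) := ⟨by norm_num⟩

open Equiv MulAction Pointwise

/-!
The affine maps `z ↦ a z + b` of `ZMod 11` with `a` a nonzero square form a subgroup `A` of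
order `55` containing the first two generators. The group permutes the left cosets of `A` the
way `PSL(2, 11)` permutes the projective line over `ZMod 11`: with `C` the given involution,
the cosets of `1` and of `(z ↦ z + j) ∘ C`, `j ∈ ZMod 11`, are twelve distinct cosets permuted
by each generator. By orbit–stabilizer the order of the group is `12` times the order of a
subgroup of `A`, so it is at most `660`; it is divisible by `12`, `11` and `5`, so it is `660`,
and the index is `11! / 660`. Translations are transitive, and the stabilizer of `0` is
transitive on the other points, which gives 2-transitivity.
-/

section AffineSquareGroup

variable {F : Type*} [Field F]

variable (F) in
def affineSquareGroup : Subgroup (Perm F) where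
  carrier := {σ | ∃ a b, IsSquare a ∧ ∀ z, σ z = a * z + b}
  one_mem' := ⟨1, 0, IsSquare.one, fun z => by simp⟩
  mul_mem' := by
    rintro σ τ ⟨a, b, ha, hσ⟩ ⟨c, d, hc, hτ⟩
    exact ⟨a * c, a * d + b, ha.mul hc, fun z => by simp only [Perm.mul_apply, hσ, hτ]; ring⟩
  inv_mem' := by
    rintro σ ⟨a, b, ha, hσ⟩
    have ha0 : a ≠ 0 := by
      rintro rfl
      exact zero_ne_one (σ.injective (by simp [hσ]))
    refine ⟨a⁻¹, -(a⁻¹ * b), ha.inv, fun z => ?_⟩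
    rw [Perm.inv_eq_iff_eq, hσ]
    field_simp
    ring

theorem mem_affineSquareGroup_iff {σ : Perm F} :
    σ ∈ affineSquareGroup F ↔
      IsSquare (σ 1 - σ 0) ∧ ∀ z, σ z = (σ 1 - σ 0) * z + σ 0 := by
  refine ⟨fun ⟨a, b, ha, hσ⟩ => ?_, fun h => ⟨_, _, h⟩⟩
  have hσ1 : σ 1 - σ 0 = a := by simp [hσ]
  have hσ0 : σ 0 = b := by simp [hσ]
  rw [hσ1, hσ0]
  exact ⟨ha, hσ⟩

instance [Fintype F] [DecidableEq F] : DecidablePred (· ∈ affineSquareGroup F) :=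
  fun _ => decidable_of_iff _ mem_affineSquareGroup_iff.symm

theorem card_affineSquareGroup_le [Finite F] :
    Nat.card (affineSquareGroup F) ≤ Nat.card F * Nat.card {a : F // a ≠ 0 ∧ IsSquare a} := by
  rw [← Nat.card_prod]
  refine Nat.card_le_card_of_injective
    (fun σ => (σ.1 0, ⟨σ.1 1 - σ.1 0, sub_ne_zero.2 (σ.1.injective.ne one_ne_zero),
      (mem_affineSquareGroup_iff.1 σ.2).1⟩)) fun σ τ hστ => ?_
  simp only [Prod.mk.injEq, Subtype.mk.injEq] at hστ
  ext z
  rw [(mem_affineSquareGroup_iff.1 σ.2).2, (mem_affineSquareGroup_iff.1 τ.2).2, hστ.2, hστ.1]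

end AffineSquareGroup

section OrbitBound

variable {G : Type*} [Group G]

theorem closure_le_stabilizer_of_smul_subset {α : Type*} [MulAction G α] [DecidableEq α]
    {s : Set G} {T : Finset α} (h : ∀ g ∈ s, g • T ⊆ T) :
    Subgroup.closure s ≤ stabilizer G T :=
  (Subgroup.closure_le _).2 fun g hg =>
    mem_stabilizer_iff.2 (Finset.eq_of_subset_of_card_le (h g hg) (Finset.card_smul_finset g T).ge)

theorem orbit_closure_subset {α : Type*} [MulAction G α] [DecidableEq α] {s : Set G}
    {T : Finset α} {a : α} (ha : a ∈ T) (h : ∀ g ∈ s, g • T ⊆ T) :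
    orbit (Subgroup.closure s) a ⊆ T := by
  rintro _ ⟨⟨g, hg⟩, rfl⟩
  have hgT : g • T = T := mem_stabilizer_iff.1 (closure_le_stabilizer_of_smul_subset h hg)
  show g • a ∈ _
  rw [Finset.mem_coe, ← hgT]
  exact Finset.smul_mem_smul_finset ha

theorem smul_image_mk_subset {ι : Type*} [Fintype ι] {A : Subgroup G} [DecidableEq (G ⧸ A)]
    {r : ι → G} {g : G} (h : ∀ i, ∃ j, (r j)⁻¹ * (g * r i) ∈ A) :
    g • Finset.univ.image (fun i => (r i : G ⧸ A)) ⊆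
      Finset.univ.image (fun i => (r i : G ⧸ A)) := by
  intro x hx
  obtain ⟨_, hy, rfl⟩ := Finset.mem_smul_finset.1 hx
  obtain ⟨i, -, rfl⟩ := Finset.mem_image.1 hy
  obtain ⟨j, hj⟩ := h i
  exact Finset.mem_image.2 ⟨j, Finset.mem_univ j, QuotientGroup.eq.2 hj⟩

theorem card_le_ncard_orbit_mul_card [Finite G] (K A : Subgroup G) :
    Nat.card K ≤ (orbit K ((1 : G) : G ⧸ A)).ncard * Nat.card A := by
  set a : G ⧸ A := ((1 : G) : G ⧸ A)
  rw [← index_stabilizer K a, ← (stabilizer K a).card_mul_index, mul_comm]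
  gcongr
  refine Nat.card_le_card_of_injective (fun k => ⟨k.1.1, ?_⟩) fun k l hkl => ?_
  · have hk : (k.1 : G) ∈ stabilizer G a := k.2
    rwa [stabilizer_quotient] at hk
  · exact Subtype.val_injective (Subtype.val_injective (congrArg Subtype.val hkl :))

theorem ncard_orbit_dvd_card {α : Type*} [MulAction G α] (a : α) :
    (orbit G a).ncard ∣ Nat.card G :=
  index_stabilizer G a ▸ Subgroup.index_dvd_card _

end OrbitBound

theorem isMultiplyTransitive_two_of_forall_ne {X : Type*} {G : Subgroup (Perm X)} (a b : X)
    (h : ∀ x y, x ≠ y → ∃ g ∈ G, g a = x ∧ g b = y) : IsMultiplyTransitive G 2 := by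
  intro v w hv hw
  obtain ⟨g, hg, hga, hgb⟩ := h (v 0) (v 1) (hv.ne (by decide))
  obtain ⟨k, hk, hka, hkb⟩ := h (w 0) (w 1) (hw.ne (by decide))
  refine ⟨k * g⁻¹, mul_mem hk (inv_mem hg), fun i => ?_⟩
  fin_cases i
  · simp [Perm.mul_apply, ← hga, hka]
  · simp [Perm.mul_apply, ← hgb, hkb]

def kroneckerInvolution : Perm (ZMod 11) := swap 4 3 * swap 5 9 * swap 10 2 * swap 7 6

def kroneckerGroup : Subgroup (Perm (ZMod 11)) :=
  Subgroup.closure {Equiv.addRight 1, Equiv.mulLeft₀ 4 (by decide), kroneckerInvolution}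

namespace kroneckerGroup

theorem addRight_one_mem : Equiv.addRight (1 : ZMod 11) ∈ kroneckerGroup :=
  Subgroup.subset_closure (Set.mem_insert _ _)

theorem addRight_mem (x : ZMod 11) : Equiv.addRight x ∈ kroneckerGroup := by
  convert pow_mem addRight_one_mem x.val using 1
  simp

theorem mulLeft_four_mem : Equiv.mulLeft₀ (4 : ZMod 11) (by decide) ∈ kroneckerGroup :=
  Subgroup.subset_closure (Set.mem_insert_of_mem _ (Set.mem_insert _ _))

theorem kroneckerInvolution_mem : kroneckerInvolution ∈ kroneckerGroup :=
  Subgroup.subset_closure (Set.mem_insert_of_mem _ (Set.mem_insert_of_mem _ rfl))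

/-- Powers of `z ↦ 4z` send `1` to the nonzero squares, and
`z ↦ kroneckerInvolution (z + 8) + 3` fixes `0` and sends `1` to the non-square `8`. -/
theorem exists_mem_apply_zero_apply_one {d : ZMod 11} (hd : d ≠ 0) :
    ∃ g ∈ kroneckerGroup, g 0 = 0 ∧ g 1 = d := by
  obtain ⟨j, e, hg⟩ : ∃ j : Fin 5, ∃ e : Fin 2,
      let g : Perm (ZMod 11) := Equiv.mulLeft₀ 4 (by decide) ^ (j : ℕ) *
        (Equiv.addRight 3 * kroneckerInvolution * Equiv.addRight 8) ^ (e : ℕ)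
      g 0 = 0 ∧ g 1 = d := by
    revert d; decide
  exact ⟨_, mul_mem (pow_mem mulLeft_four_mem _) (pow_mem (mul_mem (mul_mem (addRight_mem 3)
    kroneckerInvolution_mem) (addRight_mem 8)) _), hg⟩

theorem isMultiplyTransitive_two : IsMultiplyTransitive kroneckerGroup 2 := by
  refine isMultiplyTransitive_two_of_forall_ne 0 1 fun x y hxy => ?_
  obtain ⟨g, hg, hg0, hg1⟩ := exists_mem_apply_zero_apply_one (sub_ne_zero.2 hxy.symm)
  refine ⟨Equiv.addRight x * g, mul_mem (addRight_mem x) hg, ?_, ?_⟩ <;>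
    simp [hg0, hg1]

/-- Left cosets of `affineSquareGroup (ZMod 11)` in the group are indexed by the projective line
over `ZMod 11`, with `none` the point at infinity. -/
def cosetRep : Option (ZMod 11) → Perm (ZMod 11)
  | none => 1
  | some j => Equiv.addRight j * kroneckerInvolution

theorem cosetRep_mem (p : Option (ZMod 11)) : cosetRep p ∈ kroneckerGroup := by
  cases p with
  | none => exact one_mem _
  | some j => exact mul_mem (addRight_mem j) kroneckerInvolution_mem

theorem cosetRep_injective :
    Function.Injective fun p => (cosetRep p : Perm (ZMod 11) ⧸ affineSquareGroup (ZMod 11)) := by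
  have h : ∀ p q, (cosetRep p)⁻¹ * cosetRep q ∈ affineSquareGroup (ZMod 11) → p = q := by
    decide
  exact fun p q hpq => h p q (QuotientGroup.eq.1 hpq)

theorem exists_cosetRep_inv_mul_mem {g : Perm (ZMod 11)}
    (hg : g ∈ ({Equiv.addRight 1, Equiv.mulLeft₀ 4 (by decide), kroneckerInvolution} :
      Set (Perm (ZMod 11)))) (p : Option (ZMod 11)) :
    ∃ q, (cosetRep q)⁻¹ * (g * cosetRep p) ∈ affineSquareGroup (ZMod 11) := by
  rcases hg with rfl | rfl | rfl <;> revert p <;> decide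

theorem ncard_orbit : (orbit kroneckerGroup ((1 : Perm (ZMod 11)) :
    Perm (ZMod 11) ⧸ affineSquareGroup (ZMod 11))).ncard = 12 := by
  set T := Finset.univ.image fun p => (cosetRep p : Perm (ZMod 11) ⧸ affineSquareGroup (ZMod 11))
  have hT : orbit kroneckerGroup ((1 : Perm (ZMod 11)) : _ ⧸ affineSquareGroup (ZMod 11)) =
      T := by
    refine (orbit_closure_subset (Finset.mem_image_of_mem _ (Finset.mem_univ none))
      fun g hg => smul_image_mk_subset (exists_cosetRep_inv_mul_mem hg)).antisymm ?_
    intro _ hx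
    obtain ⟨p, -, rfl⟩ := Finset.mem_image.1 hx
    refine ⟨⟨cosetRep p, cosetRep_mem p⟩, ?_⟩
    show cosetRep p • ((1 : Perm (ZMod 11)) : _ ⧸ affineSquareGroup (ZMod 11)) = _
    rw [Quotient.smul_mk, smul_eq_mul, mul_one]
  rw [hT, Set.ncard_coe_finset, Finset.card_image_of_injective _ cosetRep_injective]
  rfl

theorem card_eq : Nat.card kroneckerGroup = 660 := by
  have : Fact (Nat.Prime 5) := ⟨by norm_num⟩
  have h11 := Subgroup.orderOf_dvd_natCard _ addRight_one_mem
  rw [orderOf_eq_prime (p := 11) (by decide) (by decide)] at h11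
  have h5 := Subgroup.orderOf_dvd_natCard _ mulLeft_four_mem
  rw [orderOf_eq_prime (p := 5) (by decide) (by decide)] at h5
  have h12 : 12 ∣ Nat.card kroneckerGroup := ncard_orbit ▸ ncard_orbit_dvd_card _
  have hA : Nat.card (affineSquareGroup (ZMod 11)) ≤ 55 :=
    card_affineSquareGroup_le.trans_eq (by rw [Nat.card_zmod, Nat.card_eq_fintype_card]; rfl)
  have hle := card_le_ncard_orbit_mul_card kroneckerGroup (affineSquareGroup (ZMod 11))
  rw [ncard_orbit] at hle
  have hpos : 0 < Nat.card kroneckerGroup := Nat.card_pos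
  omega

theorem index_eq : kroneckerGroup.index = 60480 := by
  have h := kroneckerGroup.card_mul_index
  rw [card_eq, Nat.card_perm, Nat.card_zmod] at h
  norm_num [Nat.factorial] at h
  omega

end kroneckerGroup

/-- The subgroup of the symmetric group on 11 points (realized as permutations of
`ZMod 11`) generated by `z ↦ z+1`, `z ↦ 4z` and `(4 3)(5 9)(10 2)(7 6)` acts
2-transitively and has index `60480` in the full symmetric group. -/
theorem kronecker_group_eleven :
    IsMultiplyTransitive
        (Subgroup.closure
          {Equiv.addRight (1 : ZMod 11), Equiv.mulLeft₀ (4 : ZMod 11) (by decide),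
            Equiv.swap (4 : ZMod 11) 3 * Equiv.swap 5 9 * Equiv.swap 10 2 *
              Equiv.swap 7 6}) 2 ∧
      (Subgroup.closure
          {Equiv.addRight (1 : ZMod 11), Equiv.mulLeft₀ (4 : ZMod 11) (by decide),
            Equiv.swap (4 : ZMod 11) 3 * Equiv.swap 5 9 * Equiv.swap 10 2 *
              Equiv.swap 7 6}).index = 60480 :=
  ⟨kroneckerGroup.isMultiplyTransitive_two, kroneckerGroup.index_eq⟩
end

section
/- If a subgroup G of Sym(X) with |X| = n is k-transitive for some k > n/2, then G contains the alternating group Alt(X). -/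
/-!
If `G` is `k`-transitive, every permutation agrees with an element of `G` on any `k` points,
so a permutation `g ∈ G` moving at most `k` points has all its conjugates in `Perm X` inside `G`.
For `k ≥ n - 1` this already forces `G = Perm X`. Otherwise some `g ∈ G` that agrees with a
transposition on `k` points is nontrivial and moves at most `n - k + 1 ≤ k` points; for `c` moved
and `d` fixed by `g`, the commutator `⁅swap c d, g⁆ = swap c d * swap (g c) d` is a three-cycle
in `G`. Since `k ≥ 3`, all three-cycles are conjugate to it, hence lie in `G`, and they generate
the alternating group.
-/

open Equiv Equiv.Perm Finset
open scoped commutatorElement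

namespace Equiv.Perm

variable {X : Type*} [Fintype X] [DecidableEq X]

theorem card_support_add_card_le_of_forall_mem_fixed {f : Perm X} {B : Finset X}
    (hB : ∀ x ∈ B, f x = x) : #f.support + #B ≤ Fintype.card X := by
  have hdisj : _root_.Disjoint f.support B :=
    disjoint_left.2 fun x hx hxB => mem_support.1 hx (hB x hxB)
  rw [← card_union_of_disjoint hdisj]
  exact card_le_univ _

theorem isThreeCycle_commutatorElement_swap {g : Perm X} {c d : X} (hc : c ∈ g.support)
    (hd : d ∉ g.support) : (⁅swap c d, g⁆ : Perm X).IsThreeCycle := by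
  have hcd : c ≠ d := fun h => hd (h ▸ hc)
  have hgd : g d = d := notMem_support.1 hd
  have hgc : g c ≠ c := mem_support.1 hc
  have hgcd : g c ≠ d := fun h => hcd (g.injective (h.trans hgd.symm))
  have : ⁅swap c d, g⁆ = swap d c * swap d (g c) := by
    rw [commutatorElement_def, swap_inv, mul_assoc (swap c d) g, mul_assoc (swap c d),
      ← swap_apply_apply, hgd, swap_comm c d, swap_comm (g c) d]
  rw [this]
  exact isThreeCycle_swap_mul_swap_same hcd.symm hgcd.symm hgc.symm

end Equiv.Perm

namespace IsMultiplyTransitive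

variable {X : Type*} [Fintype X] {G : Subgroup (Perm X)} {k : ℕ}

theorem exists_mem_eqOn (htrans : IsMultiplyTransitive G k) (hk : k ≤ Fintype.card X)
    (σ : Perm X) {B : Finset X} (hB : #B ≤ k) : ∃ g ∈ G, ∀ x ∈ B, g x = σ x := by
  obtain ⟨C, hBC, -, hC⟩ := exists_subsuperset_card_eq (subset_univ B) hB (by simpa using hk)
  let e : Fin k ≃ C := (C.equivFin.trans (finCongr hC)).symm
  have hv : Function.Injective fun i => (e i : X) := Subtype.val_injective.comp e.injective
  obtain ⟨g, hg, hgσ⟩ := htrans _ _ hv (σ.injective.comp hv)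
  refine ⟨g, hg, fun x hx => ?_⟩
  simpa using hgσ (e.symm ⟨x, hBC hx⟩)

theorem conj_mem [DecidableEq X] (htrans : IsMultiplyTransitive G k)
    (hk : k ≤ Fintype.card X) {g : Perm X} (hg : g ∈ G) (hsupp : #g.support ≤ k) (π : Perm X) :
    π * g * π⁻¹ ∈ G := by
  obtain ⟨h, hh, hhπ⟩ := htrans.exists_mem_eqOn hk π hsupp
  have hdisj : Disjoint (π⁻¹ * h) g := fun x => by
    by_cases hx : x ∈ g.support
    · left; simp [hhπ x hx]
    · right; exact notMem_support.1 hx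
  have : h * g * h⁻¹ = π * g * π⁻¹ :=
    calc h * g * h⁻¹ = π * ((π⁻¹ * h) * g) * (π⁻¹ * h)⁻¹ * π⁻¹ := by group
      _ = π * (g * (π⁻¹ * h)) * (π⁻¹ * h)⁻¹ * π⁻¹ := by rw [hdisj.commute.eq]
      _ = π * g * π⁻¹ := by group
  rw [← this]
  exact G.mul_mem (G.mul_mem hh hg) (G.inv_mem hh)

theorem eq_top [DecidableEq X] (htrans : IsMultiplyTransitive G k) (hk : k ≤ Fintype.card X)
    (hn : Fintype.card X ≤ k + 1) : G = ⊤ := by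
  refine eq_top_iff.2 fun σ _ => ?_
  obtain ⟨B, -, hB⟩ := exists_subset_card_eq (s := (univ : Finset X)) (by simpa using hk)
  obtain ⟨g, hg, hgσ⟩ := htrans.exists_mem_eqOn hk σ hB.le
  have hfix : ∀ x ∈ B, (σ⁻¹ * g) x = x := fun x hx => by simp [hgσ x hx]
  have hcard := card_support_add_card_le_of_forall_mem_fixed hfix
  have hσg : σ⁻¹ * g = 1 := card_support_le_one.1 (by omega)
  rwa [← inv_mul_eq_one.1 hσg] at hg

theorem exists_ne_one_card_support_le [DecidableEq X] (htrans : IsMultiplyTransitive G k)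
    (hk : k < Fintype.card X) (hk0 : 0 < k) :
    ∃ g ∈ G, g ≠ 1 ∧ #g.support + k ≤ Fintype.card X + 1 := by
  obtain ⟨x, y, hxy⟩ := Fintype.exists_pair_of_one_lt_card (α := X) (by omega)
  obtain ⟨P, hP, hPk⟩ := exists_subset_card_eq (s := ({x, y} : Finset X)ᶜ) (n := k - 1) (by
    rw [card_compl, card_pair hxy]; omega)
  have hxP : x ∉ P := fun h => by simpa using hP h
  obtain ⟨g, hg, hgswap⟩ := htrans.exists_mem_eqOn hk.le (swap x y) (B := insert x P)
    (by rw [card_insert_of_notMem hxP]; omega)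
  have hgx : g x = y := by simpa using hgswap x (mem_insert_self x P)
  have hfix : ∀ p ∈ P, g p = p := fun p hp => by
    have hp' : p ≠ x ∧ p ≠ y := by simpa using hP hp
    rw [hgswap p (mem_insert_of_mem hp), swap_apply_of_ne_of_ne hp'.1 hp'.2]
  refine ⟨g, hg, fun h => hxy (by simpa [h] using hgx), ?_⟩
  have := card_support_add_card_le_of_forall_mem_fixed hfix
  omega

theorem alternatingGroup_le [DecidableEq X] (htrans : IsMultiplyTransitive G k)
    (hk : k ≤ Fintype.card X) (hk3 : 3 ≤ k) {τ : Perm X} (hτ : τ.IsThreeCycle) (hτG : τ ∈ G) :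
    alternatingGroup X ≤ G := by
  rw [← closure_three_cycles_eq_alternating, Subgroup.closure_le]
  intro σ hσ
  have hτσ : IsConj τ σ := isConj_of_cycleType_eq (hτ.trans (hσ : σ.IsThreeCycle).symm)
  obtain ⟨π, rfl⟩ := isConj_iff.1 hτσ
  exact htrans.conj_mem hk hτG (by rw [hτ.card_support]; exact hk3) π

end IsMultiplyTransitive

/-- If a subgroup `G` of the symmetric group on a finite set `X` with `n` elements is
`k`-transitive for some `k > n/2` (with `k ≤ n`), then `G` contains the alternating
group of `X`. -/
theorem multiply_transitive_gt_half_contains_alternating {X : Type*} [Fintype X]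
    [DecidableEq X] (G : Subgroup (Equiv.Perm X)) (k : ℕ) (hk : k ≤ Fintype.card X)
    (hhalf : Fintype.card X / 2 < k) (htrans : IsMultiplyTransitive G k) :
    alternatingGroup X ≤ G := by
  rcases le_or_gt (Fintype.card X) (k + 1) with hn | hn
  · rw [htrans.eq_top hk hn]
    exact le_top
  obtain ⟨g, hg, hg1, hgsupp⟩ := htrans.exists_ne_one_card_support_le (by omega) (by omega)
  obtain ⟨c, hc⟩ : g.support.Nonempty :=
    nonempty_iff_ne_empty.2 (support_eq_empty_iff.not.2 hg1)
  obtain ⟨d, hd⟩ : ∃ d, d ∉ g.support := by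
    by_contra! h
    rw [eq_univ_of_forall h, card_univ] at hgsupp
    omega
  have hτG : ⁅swap c d, g⁆ ∈ G :=
    G.mul_mem (htrans.conj_mem hk hg (by omega) _) (G.inv_mem hg)
  exact htrans.alternatingGroup_le hk (by omega) (isThreeCycle_commutatorElement_swap hc hd) hτG
end

section
/- The group of permutations of P¹(F_9) generated by the maps z ↦ (Az+B)/(Cz+D) with AD−BC a square in F_9* and z ↦ (A₁z³+B₁)/(C₁z³+D₁) with A₁D₁−B₁C₁ a non-square has order 8·9·10 = 720 and acts 3-transitively on the 10 points of P¹(F_9). -/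
open scoped Classical

/-- The fractional linear map `z ↦ (Az+B)/(Cz+D)` on the projective line over `F_9`,
realized as `Option (GaloisField 3 2)` with `none` playing the role of `∞`. -/
noncomputable def moebius (A B C D : GaloisField 3 2) :
    Option (GaloisField 3 2) → Option (GaloisField 3 2)
  | none => if C = 0 then none else some (A / C)
  | some z => if C * z + D = 0 then none else some ((A * z + B) / (C * z + D))

/-- The twisted map `z ↦ (A₁z³+B₁)/(C₁z³+D₁)` on `P¹(F_9)`, where `z ↦ z³` is the
Frobenius automorphism of `F_9`. -/
noncomputable def moebiusFrob (A B C D : GaloisField 3 2) :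
    Option (GaloisField 3 2) → Option (GaloisField 3 2)
  | none => if C = 0 then none else some (A / C)
  | some z => if C * z ^ 3 + D = 0 then none else some ((A * z ^ 3 + B) / (C * z ^ 3 + D))

/-- The permutations of `P¹(F_9)` which are fractional linear maps with square
determinant, together with the Frobenius-twisted fractional linear maps with
non-square determinant. -/
def mTenMaps : Set (Equiv.Perm (Option (GaloisField 3 2))) :=
  {f | (∃ A B C D : GaloisField 3 2,
          (A * D - B * C ≠ 0 ∧ IsSquare (A * D - B * C)) ∧ ∀ x, f x = moebius A B C D x) ∨
       (∃ A B C D : GaloisField 3 2,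
          (A * D - B * C ≠ 0 ∧ ¬ IsSquare (A * D - B * C)) ∧
            ∀ x, f x = moebiusFrob A B C D x)}

/-!
Write the points of `P¹(F₉)` in homogeneous coordinates `[x : y]`. Then `z ↦ (Az+B)/(Cz+D)` is the
action of the matrix `M = (A B; C D)` and `z ↦ z³` is the coordinatewise Frobenius `φ`, which
satisfies `φ ∘ M = φ(M) ∘ φ` and `φ² = 1`. Composites of the given maps are again of the form
`M` or `M ∘ φ`, and the class of `det M` in `F₉*/F₉*²` is multiplicative and preserved by `φ`;
so the given maps are closed under composition, and, the permutation group being finite, they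
already form the group they generate.

This group `G` is sharply 3-transitive. Given distinct points `a, b, c`, the matrix with columns
proportional to `a` and `b` and summing to `c` sends `∞, 0, 1` to `a, b, c`; if its determinant is
a non-square, precompose with `φ`, which fixes `∞, 0, 1`. An element of `G` fixing `∞, 0, 1` is a
scalar matrix (possibly composed with `φ`); its determinant is a square, so it is the identity.
Hence `|G| = 10 · 9 · 8 = 720`.
-/

open Function

theorem isSquare_map_iff_of_involutive {M S : Type*} [Monoid M] [FunLike S M M]
    [MonoidHomClass S M M] (σ : S) (hσ : ∀ a, σ (σ a) = a) {a : M} :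
    IsSquare (σ a) ↔ IsSquare a :=
  ⟨fun h => hσ a ▸ h.map σ, IsSquare.map σ⟩

theorem FiniteField.isSquare_mul_iff {F : Type*} [Field F] [Finite F] {a b : F}
    (ha : a ≠ 0) (hb : b ≠ 0) : IsSquare (a * b) ↔ (IsSquare a ↔ IsSquare b) := by
  classical
  have := Fintype.ofFinite F
  rw [← quadraticChar_one_iff_isSquare ha, ← quadraticChar_one_iff_isSquare hb,
    ← quadraticChar_one_iff_isSquare (mul_ne_zero ha hb), map_mul]
  rcases quadraticChar_dichotomy ha with h | h <;>
    rcases quadraticChar_dichotomy hb with h' | h' <;> simp [h, h']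

theorem det_fin_two_mul {R : Type*} [CommRing R] (A B C D A' B' C' D' : R) :
    (A * A' + B * C') * (C * B' + D * D') - (A * B' + B * D') * (C * A' + D * C') =
      (A * D - B * C) * (A' * D' - B' * C') := by
  ring

theorem linear_ne_zero_of_det_ne_zero {K : Type*} [Field K] {A B C D x y : K}
    (hdet : A * D - B * C ≠ 0) (h : x ≠ 0 ∨ y ≠ 0) :
    A * x + B * y ≠ 0 ∨ C * x + D * y ≠ 0 := by
  by_contra! ⟨h₁, h₂⟩
  have hx : (A * D - B * C) * x = 0 := by linear_combination D * h₁ - B * h₂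
  have hy : (A * D - B * C) * y = 0 := by linear_combination A * h₂ - C * h₁
  simp only [mul_eq_zero, hdet, false_or] at hx hy
  tauto

section MultiplyTransitive

variable {X : Type*} {k : ℕ} {G : Subgroup (Equiv.Perm X)} (b : Fin k ↪ X)

theorem isMultiplyTransitive_of_exists_map
    (hmap : ∀ w : Fin k ↪ X, ∃ g ∈ G, ∀ i, g (b i) = w i) : IsMultiplyTransitive G k := by
  intro v w hv hw
  obtain ⟨g, hg, hgv⟩ := hmap ⟨v, hv⟩
  obtain ⟨g', hg', hg'w⟩ := hmap ⟨w, hw⟩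
  refine ⟨g' * g⁻¹, G.mul_mem hg' (G.inv_mem hg), fun i => ?_⟩
  have hgv' : g⁻¹ (v i) = b i := Equiv.Perm.inv_eq_iff_eq.2 (hgv i).symm
  rw [Equiv.Perm.mul_apply, hgv']
  exact hg'w i

theorem natCard_eq_card_embedding_of_sharply_transitive
    (hmap : ∀ w : Fin k ↪ X, ∃ g ∈ G, ∀ i, g (b i) = w i)
    (hfix : ∀ g ∈ G, (∀ i, g (b i) = b i) → g = 1) :
    Nat.card G = Nat.card (Fin k ↪ X) := by
  refine Nat.card_eq_of_bijective
    (fun g : G => ⟨fun i => g.1 (b i), g.1.injective.comp b.injective⟩) ⟨?_, fun w => ?_⟩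
  · intro g h hgh
    have hb : ∀ i, g.1 (b i) = h.1 (b i) := fun i => congrArg (· i) hgh
    refine Subtype.ext (inv_mul_eq_one.1 (hfix _ (G.mul_mem (G.inv_mem h.2) g.2) fun i => ?_)).symm
    exact Equiv.Perm.inv_eq_iff_eq.2 (hb i)
  · obtain ⟨g, hg, hgw⟩ := hmap w
    exact ⟨⟨g, hg⟩, Embedding.ext hgw⟩

end MultiplyTransitive

namespace ProjectiveLine

variable {K : Type*} [Field K]

/-- The point `[x : y]`; the junk value at `(0, 0)` is `∞`. -/
noncomputable def mk (x y : K) : Option K := if y = 0 then none else some (x / y)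

theorem exists_eq_mk (p : Option K) : ∃ x y : K, (x ≠ 0 ∨ y ≠ 0) ∧ mk x y = p := by
  cases p with
  | none => exact ⟨1, 0, Or.inl one_ne_zero, by simp [mk]⟩
  | some z => exact ⟨z, 1, Or.inr one_ne_zero, by simp [mk]⟩

theorem mk_mul_mul {t : K} (ht : t ≠ 0) (x y : K) : mk (t * x) (t * y) = mk x y := by
  simp [mk, ht, mul_div_mul_left]

theorem mk_eq_mk_iff {x y x' y' : K} (h : x ≠ 0 ∨ y ≠ 0) (h' : x' ≠ 0 ∨ y' ≠ 0) :
    mk x y = mk x' y' ↔ x * y' = x' * y := by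
  by_cases hy : y = 0 <;> by_cases hy' : y' = 0 <;> simp_all [mk, div_eq_div_iff]

theorem cross_ne_zero_of_mk_ne {x y x' y' : K} (h : x ≠ 0 ∨ y ≠ 0) (h' : x' ≠ 0 ∨ y' ≠ 0)
    (hne : mk x y ≠ mk x' y') : x * y' - x' * y ≠ 0 :=
  sub_ne_zero.2 fun heq => hne ((mk_eq_mk_iff h h').2 heq)

theorem map_mk (σ : K →+* K) (x y : K) : Option.map σ (mk x y) = mk (σ x) (σ y) := by
  by_cases hy : y = 0 <;> simp [mk, hy, map_div₀]

end ProjectiveLine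

namespace M10

open ProjectiveLine

local notation "F9" => GaloisField 3 2

local notation "φ" => frobenius (GaloisField 3 2) 3

theorem frobenius_frobenius (x : F9) : φ (φ x) = x := by
  have := Fintype.ofFinite F9
  have hcard : Fintype.card F9 = 3 ^ 2 := by
    rw [← Nat.card_eq_fintype_card, GaloisField.card 3 2 two_ne_zero]
  rw [frobenius_def, frobenius_def, ← pow_mul, ← sq, ← hcard, FiniteField.pow_card]

theorem isSquare_frobenius_iff {a : F9} : IsSquare (φ a) ↔ IsSquare a :=
  isSquare_map_iff_of_involutive _ frobenius_frobenius

theorem moebius_mk {A B C D x y : F9} (h : x ≠ 0 ∨ y ≠ 0) :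
    moebius A B C D (mk x y) = mk (A * x + B * y) (C * x + D * y) := by
  by_cases hy : y = 0
  · have hx : x ≠ 0 := h.resolve_right (not_not.2 hy)
    subst hy
    by_cases hC : C = 0 <;> simp [mk, moebius, hx, hC, mul_div_mul_right]
  · have hden : C * (x / y) + D = (C * x + D * y) / y := by field_simp
    have hnum : A * (x / y) + B = (A * x + B * y) / y := by field_simp
    simp only [mk, hy, ↓reduceIte, moebius, hden, hnum, div_eq_zero_iff, or_false,
      div_div_div_cancel_right₀ hy]

theorem moebius_comp {A B C D A' B' C' D' : F9} (hdet : A' * D' - B' * C' ≠ 0)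
    (p : Option F9) :
    moebius A B C D (moebius A' B' C' D' p) =
      moebius (A * A' + B * C') (A * B' + B * D') (C * A' + D * C') (C * B' + D * D') p := by
  obtain ⟨x, y, hxy, rfl⟩ := exists_eq_mk p
  rw [moebius_mk hxy, moebius_mk (linear_ne_zero_of_det_ne_zero hdet hxy), moebius_mk hxy]
  congr 1 <;> ring

theorem moebius_scalar {k : F9} (hk : k ≠ 0) (p : Option F9) : moebius k 0 0 k p = p := by
  obtain ⟨x, y, hxy, rfl⟩ := exists_eq_mk p
  rw [moebius_mk hxy]
  simpa using mk_mul_mul hk x y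

theorem moebius_adjugate_moebius {A B C D : F9} (hdet : A * D - B * C ≠ 0) (p : Option F9) :
    moebius D (-B) (-C) A (moebius A B C D p) = p := by
  rw [moebius_comp hdet]
  convert moebius_scalar hdet p using 2 <;> ring

noncomputable def moebiusPerm {A B C D : F9} (hdet : A * D - B * C ≠ 0) :
    Equiv.Perm (Option F9) :=
  Equiv.ofBijective (moebius A B C D)
    (Finite.injective_iff_bijective.1 (LeftInverse.injective (moebius_adjugate_moebius hdet)))

noncomputable def frob : Option F9 → Option F9 := Option.map φ

theorem frob_involutive : Involutive frob := by
  intro p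
  cases p <;> simp [frob, frobenius_frobenius]

theorem moebiusFrob_eq (A B C D : F9) (p : Option F9) :
    moebiusFrob A B C D p = moebius A B C D (frob p) := by
  cases p <;> rfl

theorem frob_moebius (A B C D : F9) (p : Option F9) :
    frob (moebius A B C D p) = moebius (φ A) (φ B) (φ C) (φ D) (frob p) := by
  obtain ⟨x, y, hxy, rfl⟩ := exists_eq_mk p
  have hφ : φ x ≠ 0 ∨ φ y ≠ 0 := by simpa only [map_ne_zero] using hxy
  rw [moebius_mk hxy, frob, map_mk, map_mk, moebius_mk hφ]
  simp only [map_add, map_mul]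

theorem frobenius_det (A B C D : F9) : φ (A * D - B * C) = φ A * φ D - φ B * φ C := by
  simp only [map_sub, map_mul]

theorem mul_mem_mTenMaps {f g : Equiv.Perm (Option F9)} (hf : f ∈ mTenMaps)
    (hg : g ∈ mTenMaps) : f * g ∈ mTenMaps := by
  rcases hf with ⟨A, B, C, D, ⟨hd, hs⟩, hf⟩ | ⟨A, B, C, D, ⟨hd, hs⟩, hf⟩ <;>
    rcases hg with ⟨A', B', C', D', ⟨hd', hs'⟩, hg⟩ | ⟨A', B', C', D', ⟨hd', hs'⟩, hg⟩
  · refine Or.inl ⟨A * A' + B * C', A * B' + B * D', C * A' + D * C', C * B' + D * D',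
      ?_, fun p => ?_⟩
    · rw [det_fin_two_mul]
      exact ⟨mul_ne_zero hd hd', hs.mul hs'⟩
    · rw [Equiv.Perm.mul_apply, hg, hf, moebius_comp hd']
  · refine Or.inr ⟨A * A' + B * C', A * B' + B * D', C * A' + D * C', C * B' + D * D',
      ?_, fun p => ?_⟩
    · rw [det_fin_two_mul, FiniteField.isSquare_mul_iff hd hd']
      exact ⟨mul_ne_zero hd hd', by tauto⟩
    · rw [Equiv.Perm.mul_apply, hg, hf, moebiusFrob_eq, moebiusFrob_eq, moebius_comp hd']
  · refine Or.inr ⟨A * φ A' + B * φ C', A * φ B' + B * φ D', C * φ A' + D * φ C',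
      C * φ B' + D * φ D', ?_, fun p => ?_⟩
    · rw [det_fin_two_mul, ← frobenius_det,
        FiniteField.isSquare_mul_iff hd ((map_ne_zero _).2 hd'), isSquare_frobenius_iff]
      exact ⟨mul_ne_zero hd ((map_ne_zero _).2 hd'), by tauto⟩
    · rw [Equiv.Perm.mul_apply, hg, hf, moebiusFrob_eq, moebiusFrob_eq, frob_moebius,
        moebius_comp (by rwa [← frobenius_det, map_ne_zero])]
  · refine Or.inl ⟨A * φ A' + B * φ C', A * φ B' + B * φ D', C * φ A' + D * φ C',
      C * φ B' + D * φ D', ?_, fun p => ?_⟩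
    · rw [det_fin_two_mul, ← frobenius_det,
        FiniteField.isSquare_mul_iff hd ((map_ne_zero _).2 hd'), isSquare_frobenius_iff]
      exact ⟨mul_ne_zero hd ((map_ne_zero _).2 hd'), by tauto⟩
    · rw [Equiv.Perm.mul_apply, hg, hf, moebiusFrob_eq, moebiusFrob_eq, frob_moebius,
        frob_involutive, moebius_comp (by rwa [← frobenius_det, map_ne_zero])]

def mTenSubmonoid : Submonoid (Equiv.Perm (Option F9)) where
  carrier := mTenMaps
  one_mem' :=
    Or.inl ⟨1, 0, 0, 1, ⟨by simp, by simp⟩, fun p => (moebius_scalar one_ne_zero p).symm⟩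
  mul_mem' := mul_mem_mTenMaps

theorem mem_closure_mTenMaps_iff {g : Equiv.Perm (Option F9)} :
    g ∈ Subgroup.closure mTenMaps ↔ g ∈ mTenMaps := by
  rw [← Subgroup.mem_toSubmonoid, Subgroup.closure_toSubmonoid_of_finite]
  exact Submonoid.ext_iff.1 (Submonoid.closure_eq mTenSubmonoid) g

theorem injective_base : Injective ![mk 1 0, mk 0 1, (mk 1 1 : Option F9)] := by
  intro i j hij
  fin_cases i <;> fin_cases j <;> simp_all [mk]

noncomputable def base : Fin 3 ↪ Option F9 := ⟨_, injective_base⟩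

theorem frob_base (i : Fin 3) : frob (base i) = base i := by
  fin_cases i <;> simp [base, frob, mk]

theorem exists_moebius_map_base (w : Fin 3 ↪ Option F9) :
    ∃ A B C D : F9, A * D - B * C ≠ 0 ∧ ∀ i, moebius A B C D (base i) = w i := by
  obtain ⟨a₁, a₂, ha, hpa⟩ := exists_eq_mk (w 0)
  obtain ⟨b₁, b₂, hb, hpb⟩ := exists_eq_mk (w 1)
  obtain ⟨c₁, c₂, hc, hpc⟩ := exists_eq_mk (w 2)
  have hab := cross_ne_zero_of_mk_ne ha hb (by rw [hpa, hpb]; exact w.injective.ne (by decide))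
  have hac := cross_ne_zero_of_mk_ne ha hc (by rw [hpa, hpc]; exact w.injective.ne (by decide))
  have hcb := cross_ne_zero_of_mk_ne hc hb (by rw [hpc, hpb]; exact w.injective.ne (by decide))
  -- With `[u, v] := u₁ v₂ - v₁ u₂`, the columns are `[c, b] • a` and `[a, c] • b`, whose sum is
  -- `[a, b] • c` (Cramer's rule).
  refine ⟨(c₁ * b₂ - b₁ * c₂) * a₁, (a₁ * c₂ - c₁ * a₂) * b₁, (c₁ * b₂ - b₁ * c₂) * a₂,
    (a₁ * c₂ - c₁ * a₂) * b₂, ?_, fun i => ?_⟩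
  · have hdet : (c₁ * b₂ - b₁ * c₂) * a₁ * ((a₁ * c₂ - c₁ * a₂) * b₂) -
        (a₁ * c₂ - c₁ * a₂) * b₁ * ((c₁ * b₂ - b₁ * c₂) * a₂) =
        (c₁ * b₂ - b₁ * c₂) * (a₁ * c₂ - c₁ * a₂) * (a₁ * b₂ - b₁ * a₂) := by ring
    rw [hdet]
    exact mul_ne_zero (mul_ne_zero hcb hac) hab
  fin_cases i
  · show moebius _ _ _ _ (mk 1 0) = w 0
    rw [moebius_mk (by simp), ← hpa, ← mk_mul_mul hcb a₁ a₂]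
    congr 1 <;> ring
  · show moebius _ _ _ _ (mk 0 1) = w 1
    rw [moebius_mk (by simp), ← hpb, ← mk_mul_mul hac b₁ b₂]
    congr 1 <;> ring
  · show moebius _ _ _ _ (mk 1 1) = w 2
    rw [moebius_mk (by simp), ← hpc, ← mk_mul_mul hab c₁ c₂]
    congr 1 <;> ring

theorem exists_mem_map_base (w : Fin 3 ↪ Option F9) :
    ∃ g ∈ Subgroup.closure mTenMaps, ∀ i, g (base i) = w i := by
  obtain ⟨A, B, C, D, hd, hw⟩ := exists_moebius_map_base w
  by_cases hs : IsSquare (A * D - B * C)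
  · exact ⟨moebiusPerm hd,
      mem_closure_mTenMaps_iff.2 (Or.inl ⟨A, B, C, D, ⟨hd, hs⟩, fun _ => rfl⟩), hw⟩
  · refine ⟨frob_involutive.toPerm.trans (moebiusPerm hd), mem_closure_mTenMaps_iff.2
      (Or.inr ⟨A, B, C, D, ⟨hd, hs⟩, fun p => (moebiusFrob_eq A B C D p).symm⟩), fun i => ?_⟩
    show moebius A B C D (frob (base i)) = w i
    rw [frob_base, hw]

theorem eq_scalar_of_moebius_fix_base {A B C D : F9} (hd : A * D - B * C ≠ 0)
    (hfix : ∀ i, moebius A B C D (base i) = base i) : B = 0 ∧ C = 0 ∧ A = D := by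
  have h₀ := hfix 0
  have h₁ := hfix 1
  have h₂ := hfix 2
  simp only [base, Embedding.coeFn_mk, Matrix.cons_val] at h₀ h₁ h₂
  rw [moebius_mk (by simp),
    mk_eq_mk_iff (linear_ne_zero_of_det_ne_zero hd (by simp)) (by simp)] at h₀ h₁ h₂
  exact ⟨by linear_combination h₁, by linear_combination -h₀, by linear_combination h₂ - h₁ - h₀⟩

theorem eq_one_of_fix_base {g : Equiv.Perm (Option F9)} (hg : g ∈ mTenMaps)
    (hfix : ∀ i, g (base i) = base i) : g = 1 := by
  rcases hg with ⟨A, B, C, D, ⟨hd, -⟩, hf⟩ | ⟨A, B, C, D, ⟨hd, hs⟩, hf⟩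
  · obtain ⟨rfl, rfl, rfl⟩ :=
      eq_scalar_of_moebius_fix_base hd fun i => (hf _).symm.trans (hfix i)
    ext1 p
    rw [hf, Equiv.Perm.one_apply, moebius_scalar (by simpa using hd)]
  · obtain ⟨rfl, rfl, rfl⟩ := eq_scalar_of_moebius_fix_base hd fun i =>
      ((hf _).trans (by rw [moebiusFrob_eq, frob_base])).symm.trans (hfix i)
    exact absurd ⟨A, by ring⟩ hs

end M10

/-- The group generated by the maps `z ↦ (Az+B)/(Cz+D)` with `AD−BC` a square in `F_9*`
and the maps `z ↦ (A₁z³+B₁)/(C₁z³+D₁)` with `A₁D₁−B₁C₁` a non-square has order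
`8·9·10 = 720` and acts 3-transitively on the 10 points of `P¹(F_9)`. -/
theorem m10_order_and_three_transitive :
    Nat.card (Subgroup.closure mTenMaps) = 720 ∧
      IsMultiplyTransitive (Subgroup.closure mTenMaps) 3 := by
  have hfix : ∀ g ∈ Subgroup.closure mTenMaps, (∀ i, g (M10.base i) = M10.base i) → g = 1 :=
    fun g hg => M10.eq_one_of_fix_base (M10.mem_closure_mTenMaps_iff.1 hg)
  refine ⟨?_, isMultiplyTransitive_of_exists_map M10.base M10.exists_mem_map_base⟩
  have := Fintype.ofFinite (GaloisField 3 2)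
  rw [natCard_eq_card_embedding_of_sharply_transitive M10.base M10.exists_mem_map_base hfix,
    Nat.card_eq_fintype_card, Fintype.card_embedding_eq, Fintype.card_option,
    ← Nat.card_eq_fintype_card, GaloisField.card 3 2 two_ne_zero, Fintype.card_fin]
  rfl
end
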